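/- For all a ≥ 1 and b ≥ 1, the Toads and Frogs position L T^a □ (TF)^b, where L is any finite sequence over {T,F} ending in F, has game value { a−1 | (1/2)^{b−1} }. -/

import Mathlib

universe u

namespace SetTheory

/-- Pre-games (removed from Mathlib; restated with their Mathlib (2024) meaning). -/
inductive PGame : Type (u + 1)
  | mk : ∀ α β : Type u, (α → PGame) → (β → PGame) → PGame

namespace PGame

/-- Simultaneous definition of `x ≤ y` (first) and `x ⧏ y` (second). -/
noncomputable def leLf : PGame.{u} → PGame.{u} → Prop × Prop
  | mk _ _ xL xR => fun y =>
    PGame.rec (motive := fun _ => Prop × Prop)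
      (fun yl yr yL yR ihL ihR =>
        ((∀ i, (leLf (xL i) (mk yl yr yL yR)).2) ∧ ∀ j, (ihR j).2,
         (∃ i, (ihL i).1) ∨ ∃ j, (leLf (xR j) (mk yl yr yL yR)).1)) y

instance : LE PGame.{u} := ⟨fun x y => (leLf x y).1⟩

instance : HasEquiv PGame.{u} := ⟨fun x y => x ≤ y ∧ y ≤ x⟩

instance : Zero PGame.{u} := ⟨mk PEmpty PEmpty PEmpty.elim PEmpty.elim⟩

instance : One PGame.{u} := ⟨mk PUnit PEmpty (fun _ => 0) PEmpty.elim⟩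

def neg : PGame.{u} → PGame.{u}
  | mk l r L R => mk r l (fun i => neg (R i)) (fun i => neg (L i))

instance : Neg PGame.{u} := ⟨neg⟩

def powHalf : ℕ → PGame.{u}
  | 0 => 1
  | n + 1 => mk PUnit PUnit (fun _ => 0) (fun _ => powHalf n)

end PGame

end SetTheory

open SetTheory

inductive Cell : Type
  | T | F | E
deriving DecidableEq

/-- Positions reachable from `l` by a single Toad (Left) move:
a Toad steps right into an empty square, or jumps over one adjacent Frog
into the empty square beyond. -/
def toadMoves : List Cell → List (List Cell)
  | [] => []
  | c :: rest =>
    (match c, rest with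
     | Cell.T, Cell.E :: r => [Cell.E :: Cell.T :: r]
     | Cell.T, Cell.F :: Cell.E :: r => [Cell.E :: Cell.F :: Cell.T :: r]
     | _, _ => []) ++ (toadMoves rest).map (c :: ·)

/-- Positions reachable from `l` by a single Frog (Right) move. -/
def frogMoves : List Cell → List (List Cell)
  | [] => []
  | c :: rest =>
    (match c, rest with
     | Cell.E, Cell.F :: r => [Cell.F :: Cell.E :: r]
     | Cell.E, Cell.T :: Cell.F :: r => [Cell.F :: Cell.T :: Cell.E :: r]
     | _, _ => []) ++ (frogMoves rest).map (c :: ·)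

/-- A weight which strictly decreases with every legal move: each Toad
contributes the number of squares strictly to its right, each Frog the number
of squares strictly to its left. -/
def wt : List Cell → ℕ
  | [] => 0
  | c :: rest =>
    (if c = Cell.T then rest.length else 0) + rest.countP (· = Cell.F) + wt rest

/-- Game tree with fuel; since `wt` strictly decreases along moves and
positions of weight `0` have no moves, `gameAux n l` is the true game
tree of `l` whenever `wt l ≤ n`. -/
def gameAux : ℕ → List Cell → PGame
  | 0, _ => 0
  | n + 1, l =>
    PGame.mk {m // m ∈ toadMoves l} {m // m ∈ frogMoves l}
      (fun m => gameAux n m.1) (fun m => gameAux n m.1)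

/-- The game (PGame) associated to a Toads and Frogs position. -/
def tfGame (l : List Cell) : PGame := gameAux (wt l + 1) l

/-- The game `{x | y}` with a single Left option `x` and single Right option `y`. -/
def gmk (x y : PGame) : PGame :=
  PGame.mk PUnit PUnit (fun _ => x) (fun _ => y)

/-- The canonical game of a natural number. -/
def natGame : ℕ → PGame
  | 0 => 0
  | n + 1 => PGame.mk PUnit PEmpty (fun _ => natGame n) (fun x => x.elim)

/-- The canonical game of an integer. -/
def intGame : ℤ → PGame
  | Int.ofNat n => natGame n
  | Int.negSucc n => -natGame (n + 1)

/-- `(TF)^b` : the block `TF` repeated `b` times. -/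
def tfBlock (b : ℕ) : List Cell := (List.replicate b [Cell.T, Cell.F]).flatten

/-!
Every position that arises has a single empty square, so each side has at most one move. In
`L T^a □ T w`, with `L` ending in `F` and `w` not starting with `F`, Right cannot move and Left can
only slide a toad, reaching the same family with `a - 1`; at `a = 0` Left's one possible move, a
jump out of `L = M T F`, is reversed by Right's reply `M F □ T T w`, again of that family. Hence
`L T^a □ T w = a`. In `L T^a □ (TF)^b` Left's slide reaches this family with value `a - 1`, while
Right's jump over the first `TF` leaves `L' T □ (TF)^(b-1)` with `L' = L T^a F`; by the same
analysis `L' T □ (TF)^(k+1) = {0 | (1/2)^k} = (1/2)^(k+1)`, so by induction on `k` that option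
equals `(1/2)^(b-1)`.
-/

namespace SetTheory.PGame

def LF (x y : PGame.{u}) : Prop := (leLf x y).2

infix:50 " ⧏ " => LF

variable {xl xr yl yr : Type u} {xL : xl → PGame.{u}} {xR : xr → PGame.{u}}
  {yL : yl → PGame.{u}} {yR : yr → PGame.{u}}

theorem mk_le_mk :
    mk xl xr xL xR ≤ mk yl yr yL yR ↔
      (∀ i, xL i ⧏ mk yl yr yL yR) ∧ ∀ j, mk xl xr xL xR ⧏ yR j := Iff.rfl

theorem mk_lf_mk :
    mk xl xr xL xR ⧏ mk yl yr yL yR ↔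
      (∃ i, mk xl xr xL xR ≤ yL i) ∨ ∃ j, xR j ≤ mk yl yr yL yR := Iff.rfl

theorem lf_mk_of_le {x : PGame.{u}} (i : yl) (h : x ≤ yL i) : x ⧏ mk yl yr yL yR := by
  cases x
  exact mk_lf_mk.2 (Or.inl ⟨i, h⟩)

theorem mk_lf_of_le {y : PGame.{u}} (j : xr) (h : xR j ≤ y) : mk xl xr xL xR ⧏ y := by
  cases y
  exact mk_lf_mk.2 (Or.inr ⟨j, h⟩)

theorem le_lf_trans (x y z : PGame.{u}) :
    (x ≤ y → y ≤ z → x ≤ z) ∧ (x ≤ y → y ⧏ z → x ⧏ z) ∧ (x ⧏ y → y ≤ z → x ⧏ z) := by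
  induction x generalizing y z with | mk xl xr xL xR ihxL ihxR =>
  induction y generalizing z with | mk yl yr yL yR ihyL ihyR =>
  induction z with | mk zl zr zL zR ihzL ihzR =>
  refine ⟨fun hxy hyz => ?_, fun hxy hyz => ?_, fun hxy hyz => ?_⟩
  · exact mk_le_mk.2 ⟨fun i => (ihxL i _ _).2.2 ((mk_le_mk.1 hxy).1 i) hyz,
      fun j => (ihzR j).2.1 hxy ((mk_le_mk.1 hyz).2 j)⟩
  · rcases mk_lf_mk.1 hyz with ⟨i, h⟩ | ⟨j, h⟩
    · exact mk_lf_mk.2 (Or.inl ⟨i, (ihzL i).1 hxy h⟩)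
    · exact (ihyR j _).2.2 ((mk_le_mk.1 hxy).2 j) h
  · rcases mk_lf_mk.1 hxy with ⟨i, h⟩ | ⟨j, h⟩
    · exact (ihyL i _).2.1 h ((mk_le_mk.1 hyz).1 i)
    · exact mk_lf_mk.2 (Or.inr ⟨j, (ihxR j _ _).1 h hyz⟩)

theorem lf_of_le_of_lf {x y z : PGame.{u}} (h₁ : x ≤ y) (h₂ : y ⧏ z) : x ⧏ z :=
  (le_lf_trans x y z).2.1 h₁ h₂

theorem lf_of_lf_of_le {x y z : PGame.{u}} (h₁ : x ⧏ y) (h₂ : y ≤ z) : x ⧏ z :=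
  (le_lf_trans x y z).2.2 h₁ h₂

protected theorem le_refl (x : PGame.{u}) : x ≤ x := by
  induction x with | mk l r L R ihL ihR =>
  exact mk_le_mk.2 ⟨fun i => lf_mk_of_le i (ihL i), fun j => mk_lf_of_le j (ihR j)⟩

theorem mk_equiv_mk (hL : ∀ i, ∃ i', xL i ≈ yL i') (hL' : ∀ i', ∃ i, xL i ≈ yL i')
    (hR : ∀ j, ∃ j', xR j ≈ yR j') (hR' : ∀ j', ∃ j, xR j ≈ yR j') :
    mk xl xr xL xR ≈ mk yl yr yL yR := by
  constructor <;> refine mk_le_mk.2 ⟨fun i => ?_, fun j => ?_⟩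
  · obtain ⟨i', h⟩ := hL i
    exact lf_of_le_of_lf h.1 (lf_mk_of_le i' (PGame.le_refl _))
  · obtain ⟨j', h⟩ := hR' j
    exact mk_lf_of_le j' h.1
  · obtain ⟨i', h⟩ := hL' i
    exact lf_mk_of_le i' h.2
  · obtain ⟨j', h⟩ := hR j
    exact lf_of_lf_of_le (mk_lf_of_le j' (PGame.le_refl _)) h.2

theorem mk_le_zero :
    mk xl xr xL xR ≤ 0 ↔ ∀ i, xL i ⧏ 0 :=
  mk_le_mk.trans ⟨fun h => h.1, fun h => ⟨h, fun j => j.elim⟩⟩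

theorem zero_le_mk :
    0 ≤ mk xl xr xL xR ↔ ∀ j, 0 ⧏ xR j :=
  mk_le_mk.trans ⟨fun h => h.2, fun h => ⟨fun i => i.elim, h⟩⟩

end SetTheory.PGame

open Cell

theorem mem_toadMoves_iff {l m : List Cell} :
    m ∈ toadMoves l ↔ ∃ p r,
      (l = p ++ T :: E :: r ∧ m = p ++ E :: T :: r) ∨
      (l = p ++ T :: F :: E :: r ∧ m = p ++ E :: F :: T :: r) := by
  constructor
  · induction l generalizing m with
    | nil => simp [toadMoves]
    | cons c rest ih =>
      intro h
      simp only [toadMoves, List.mem_append, List.mem_map] at h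
      rcases h with h | ⟨m', hm', rfl⟩
      · split at h <;> simp only [List.mem_singleton, List.not_mem_nil] at h <;> subst h
        · exact ⟨[], _, Or.inl ⟨rfl, rfl⟩⟩
        · exact ⟨[], _, Or.inr ⟨rfl, rfl⟩⟩
      · obtain ⟨p, r, ⟨rfl, rfl⟩ | ⟨rfl, rfl⟩⟩ := ih hm'
        · exact ⟨c :: p, r, Or.inl ⟨rfl, rfl⟩⟩
        · exact ⟨c :: p, r, Or.inr ⟨rfl, rfl⟩⟩
  · rintro ⟨p, r, h⟩
    induction p generalizing l m with
    | nil => rcases h with ⟨rfl, rfl⟩ | ⟨rfl, rfl⟩ <;> simp [toadMoves]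
    | cons c p ih =>
      rcases h with ⟨rfl, rfl⟩ | ⟨rfl, rfl⟩ <;>
        exact List.mem_append_right _ (List.mem_map_of_mem (ih (by simp)))

theorem mem_frogMoves_iff {l m : List Cell} :
    m ∈ frogMoves l ↔ ∃ p r,
      (l = p ++ E :: F :: r ∧ m = p ++ F :: E :: r) ∨
      (l = p ++ E :: T :: F :: r ∧ m = p ++ F :: T :: E :: r) := by
  constructor
  · induction l generalizing m with
    | nil => simp [frogMoves]
    | cons c rest ih =>
      intro h
      simp only [frogMoves, List.mem_append, List.mem_map] at h
      rcases h with h | ⟨m', hm', rfl⟩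
      · split at h <;> simp only [List.mem_singleton, List.not_mem_nil] at h <;> subst h
        · exact ⟨[], _, Or.inl ⟨rfl, rfl⟩⟩
        · exact ⟨[], _, Or.inr ⟨rfl, rfl⟩⟩
      · obtain ⟨p, r, ⟨rfl, rfl⟩ | ⟨rfl, rfl⟩⟩ := ih hm'
        · exact ⟨c :: p, r, Or.inl ⟨rfl, rfl⟩⟩
        · exact ⟨c :: p, r, Or.inr ⟨rfl, rfl⟩⟩
  · rintro ⟨p, r, h⟩
    induction p generalizing l m with
    | nil => rcases h with ⟨rfl, rfl⟩ | ⟨rfl, rfl⟩ <;> simp [frogMoves]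
    | cons c p ih =>
      rcases h with ⟨rfl, rfl⟩ | ⟨rfl, rfl⟩ <;>
        exact List.mem_append_right _ (List.mem_map_of_mem (ih (by simp)))

theorem mem_toadMoves_append_E {A B m : List Cell} (hA : E ∉ A) (hB : E ∉ B) :
    m ∈ toadMoves (A ++ E :: B) ↔
      (∃ A', A = A' ++ [T] ∧ m = A' ++ E :: T :: B) ∨
      (∃ A', A = A' ++ [T, F] ∧ m = A' ++ E :: F :: T :: B) := by
  rw [mem_toadMoves_iff]
  constructor
  · rintro ⟨p, r, ⟨hl, rfl⟩ | ⟨hl, rfl⟩⟩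
    · rw [show p ++ T :: E :: r = (p ++ [T]) ++ E :: r by simp,
        List.append_cons_inj_of_notMem hA hB] at hl
      obtain ⟨rfl, -, rfl⟩ := hl
      exact Or.inl ⟨p, rfl, rfl⟩
    · rw [show p ++ T :: F :: E :: r = (p ++ [T, F]) ++ E :: r by simp,
        List.append_cons_inj_of_notMem hA hB] at hl
      obtain ⟨rfl, -, rfl⟩ := hl
      exact Or.inr ⟨p, rfl, rfl⟩
  · rintro (⟨A', rfl, rfl⟩ | ⟨A', rfl, rfl⟩)
    · exact ⟨A', B, Or.inl ⟨by simp, rfl⟩⟩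
    · exact ⟨A', B, Or.inr ⟨by simp, rfl⟩⟩

theorem mem_frogMoves_append_E {A B m : List Cell} (hA : E ∉ A) (hB : E ∉ B) :
    m ∈ frogMoves (A ++ E :: B) ↔
      (∃ B', B = F :: B' ∧ m = A ++ F :: E :: B') ∨
      (∃ B', B = T :: F :: B' ∧ m = A ++ F :: T :: E :: B') := by
  rw [mem_frogMoves_iff]
  constructor
  · rintro ⟨p, r, ⟨hl, rfl⟩ | ⟨hl, rfl⟩⟩ <;>
      obtain ⟨rfl, -, rfl⟩ := (List.append_cons_inj_of_notMem hA hB).1 hl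
    · exact Or.inl ⟨r, rfl, rfl⟩
    · exact Or.inr ⟨r, rfl, rfl⟩
  · rintro (⟨B', rfl, rfl⟩ | ⟨B', rfl, rfl⟩)
    · exact ⟨A, B', Or.inl ⟨rfl, rfl⟩⟩
    · exact ⟨A, B', Or.inr ⟨rfl, rfl⟩⟩

theorem mem_toadMoves_append_T_E {A B m : List Cell} (hA : E ∉ A) (hB : E ∉ B) :
    m ∈ toadMoves ((A ++ [T]) ++ E :: B) ↔ m = A ++ E :: T :: B := by
  rw [mem_toadMoves_append_E (by simpa using hA) hB]
  constructor
  · rintro (⟨A', hA', rfl⟩ | ⟨A', hA', -⟩)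
    · rw [List.append_cancel_right hA']
    · simpa using congrArg List.getLast? hA'
  · rintro rfl
    exact Or.inl ⟨A, rfl, rfl⟩

theorem notMem_frogMoves_append_E_T {A w m : List Cell} (hA : E ∉ A) (hw : E ∉ w)
    (hwF : w.head? ≠ some F) : m ∉ frogMoves (A ++ E :: T :: w) := by
  rw [mem_frogMoves_append_E hA (by simpa using hw)]
  rintro (⟨B', hB', -⟩ | ⟨B', hB', -⟩)
  · simp at hB'
  · simp [(List.cons_inj_right T).1 hB'] at hwF

theorem notMem_frogMoves_append_E_nil {A m : List Cell} (hA : E ∉ A) :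
    m ∉ frogMoves (A ++ [E]) := by
  rw [mem_frogMoves_append_E hA List.not_mem_nil]
  simp

theorem mem_frogMoves_append_E_T_F {A B m : List Cell} (hA : E ∉ A) (hB : E ∉ B) :
    m ∈ frogMoves (A ++ E :: T :: F :: B) ↔ m = A ++ F :: T :: E :: B := by
  rw [mem_frogMoves_append_E hA (by simpa using hB)]
  simp

theorem wt_append_lt_wt_append (p : List Cell) {s s' : List Cell} (hlen : s'.length = s.length)
    (hF : s'.countP (· = F) = s.countP (· = F)) (hwt : wt s' < wt s) :
    wt (p ++ s') < wt (p ++ s) := by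
  induction p with
  | nil => exact hwt
  | cons c p ih =>
    simp only [List.cons_append, wt, List.length_append, List.countP_append, hlen, hF]
    omega

theorem wt_lt_of_mem_toadMoves {l m : List Cell} (h : m ∈ toadMoves l) : wt m < wt l := by
  obtain ⟨p, r, ⟨rfl, rfl⟩ | ⟨rfl, rfl⟩⟩ := mem_toadMoves_iff.1 h <;>
    exact wt_append_lt_wt_append p (by simp) (by simp) (by
      simp only [wt, List.length_cons, List.countP_cons, reduceCtorEq, decide_false, decide_true,
        if_true, if_false]
      omega)

theorem wt_lt_of_mem_frogMoves {l m : List Cell} (h : m ∈ frogMoves l) : wt m < wt l := by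
  obtain ⟨p, r, ⟨rfl, rfl⟩ | ⟨rfl, rfl⟩⟩ := mem_frogMoves_iff.1 h <;>
    exact wt_append_lt_wt_append p (by simp) (by simp) (by
      simp only [wt, List.length_cons, List.countP_cons, reduceCtorEq, decide_false, decide_true,
        if_true, if_false]
      omega)

theorem gameAux_eq_gameAux {n n' : ℕ} {l : List Cell} (hn : wt l < n) (hn' : wt l < n') :
    gameAux n l = gameAux n' l := by
  induction n generalizing n' l with
  | zero => omega
  | succ n ih =>
    obtain ⟨n', rfl⟩ : ∃ k, n' = k + 1 := ⟨n' - 1, by omega⟩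
    simp only [gameAux]
    congr 1 <;> funext m
    · have := wt_lt_of_mem_toadMoves m.2
      exact ih (by omega) (by omega)
    · have := wt_lt_of_mem_frogMoves m.2
      exact ih (by omega) (by omega)

theorem tfGame_eq (l : List Cell) :
    tfGame l = PGame.mk {m // m ∈ toadMoves l} {m // m ∈ frogMoves l}
      (fun m => tfGame m.1) (fun m => tfGame m.1) := by
  rw [tfGame, gameAux]
  congr 1 <;> funext m
  · exact gameAux_eq_gameAux (wt_lt_of_mem_toadMoves m.2) (by omega)
  · exact gameAux_eq_gameAux (wt_lt_of_mem_frogMoves m.2) (by omega)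

open SetTheory.PGame

section
variable {l x y : List Cell}

theorem tfGame_equiv_mk {α β : Type} {xL : α → PGame} {xR : β → PGame}
    (hL : ∀ m ∈ toadMoves l, ∃ i, tfGame m ≈ xL i) (hL' : ∀ i, ∃ m ∈ toadMoves l, tfGame m ≈ xL i)
    (hR : ∀ m ∈ frogMoves l, ∃ j, tfGame m ≈ xR j) (hR' : ∀ j, ∃ m ∈ frogMoves l, tfGame m ≈ xR j) :
    tfGame l ≈ PGame.mk α β xL xR := by
  rw [tfGame_eq]
  refine mk_equiv_mk (fun m => hL m.1 m.2) (fun i => ?_) (fun m => hR m.1 m.2) (fun j => ?_)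
  · obtain ⟨m, hm, h⟩ := hL' i
    exact ⟨⟨m, hm⟩, h⟩
  · obtain ⟨m, hm, h⟩ := hR' j
    exact ⟨⟨m, hm⟩, h⟩

theorem tfGame_equiv_gmk {G H : PGame} (hT : ∀ m, m ∈ toadMoves l ↔ m = x)
    (hF : ∀ m, m ∈ frogMoves l ↔ m = y) (hx : tfGame x ≈ G) (hy : tfGame y ≈ H) :
    tfGame l ≈ gmk G H :=
  tfGame_equiv_mk (by simpa [hT] using hx) (by simpa [hT] using hx)
    (by simpa [hF] using hy) (by simpa [hF] using hy)

theorem tfGame_equiv_natGame_succ {n : ℕ} (hT : ∀ m, m ∈ toadMoves l ↔ m = x)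
    (hF : ∀ m, m ∉ frogMoves l) (hx : tfGame x ≈ natGame n) : tfGame l ≈ natGame (n + 1) :=
  tfGame_equiv_mk (by simpa [hT] using hx) (by simpa [hT] using hx) (by simp [hF]) (fun j => j.elim)

theorem tfGame_equiv_zero (hF : ∀ m, m ∉ frogMoves l)
    (hT : ∀ x ∈ toadMoves l, ∃ y ∈ frogMoves x, tfGame y ≤ 0) : tfGame l ≈ 0 := by
  rw [tfGame_eq]
  refine ⟨mk_le_zero.2 fun ⟨x, hx⟩ => ?_, zero_le_mk.2 fun ⟨m, hm⟩ => (hF m hm).elim⟩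
  obtain ⟨y, hy, hy0⟩ := hT x hx
  rw [tfGame_eq x]
  exact mk_lf_of_le ⟨y, hy⟩ hy0

end

theorem tfBlock_succ (b : ℕ) : tfBlock (b + 1) = T :: F :: tfBlock b := by
  simp [tfBlock, List.replicate_succ]

theorem E_notMem_tfBlock (b : ℕ) : E ∉ tfBlock b := by
  simp [tfBlock]

theorem tfBlock_head?_ne_F (b : ℕ) : (tfBlock b).head? ≠ some F := by
  cases b <;> simp [tfBlock]

theorem tfGame_append_E_T_equiv_zero {L w : List Cell} (hL : E ∉ L)
    (hLF : L.getLast? = some F) (hw : E ∉ w) (hwF : w.head? ≠ some F) :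
    tfGame (L ++ E :: T :: w) ≈ 0 := by
  induction hn : L.length using Nat.strong_induction_on generalizing L w with
  | _ n ih =>
  refine tfGame_equiv_zero (fun m => notMem_frogMoves_append_E_T hL hw hwF) fun x hx => ?_
  obtain ⟨L₀, rfl⟩ := List.getLast?_eq_some_iff.1 hLF
  rcases (mem_toadMoves_append_E hL (by simpa using hw)).1 hx with
    ⟨A, hA, -⟩ | ⟨A, hA, rfl⟩
  · simpa using congrArg List.getLast? hA
  · have hAE : E ∉ A := fun h => hL (hA ▸ List.mem_append_left _ h)
    refine ⟨(A ++ [F]) ++ E :: T :: T :: w,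
      (mem_frogMoves_append_E hAE (by simpa using hw)).2 (Or.inl ⟨_, rfl, by simp⟩), ?_⟩
    refine (ih (A.length + 1) ?_ (by simpa using hAE) (by simp) (by simpa using hw) (by simp)
      (by simp)).1
    have := congrArg List.length hA
    simp only [List.length_append, List.length_cons, List.length_nil] at this hn
    omega

theorem tfGame_append_replicate_E_T_equiv_natGame (a : ℕ) {L w : List Cell} (hL : E ∉ L)
    (hLF : L.getLast? = some F) (hw : E ∉ w) (hwF : w.head? ≠ some F) :
    tfGame ((L ++ List.replicate a T) ++ E :: T :: w) ≈ natGame a := by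
  induction a generalizing w with
  | zero =>
    rw [List.replicate_zero, List.append_nil]
    exact tfGame_append_E_T_equiv_zero hL hLF hw hwF
  | succ a ih =>
    refine tfGame_equiv_natGame_succ (fun m => ?_)
      (fun m => notMem_frogMoves_append_E_T (by simp [hL]) hw hwF)
      (ih (w := T :: w) (by simpa using hw) (by simp))
    rw [List.replicate_succ', ← List.append_assoc]
    exact mem_toadMoves_append_T_E (by simp [hL]) (by simpa using hw)

theorem tfGame_append_replicate_E_tfBlock_equiv_gmk (a b : ℕ) {L : List Cell} (hL : E ∉ L)
    (hLF : L.getLast? = some F) {G : PGame}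
    (hG : tfGame ((L ++ List.replicate (a + 1) T ++ [F] ++ [T]) ++ E :: tfBlock b) ≈ G) :
    tfGame ((L ++ List.replicate (a + 1) T) ++ E :: tfBlock (b + 1)) ≈ gmk (natGame a) G := by
  refine tfGame_equiv_gmk (fun m => ?_) (fun m => ?_)
    (tfGame_append_replicate_E_T_equiv_natGame a hL hLF (E_notMem_tfBlock (b + 1))
      (tfBlock_head?_ne_F (b + 1))) hG
  · rw [List.replicate_succ', ← List.append_assoc]
    exact mem_toadMoves_append_T_E (by simp [hL]) (E_notMem_tfBlock _)
  · rw [tfBlock_succ, mem_frogMoves_append_E_T_F (by simp [hL]) (E_notMem_tfBlock _)]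
    simp

theorem tfGame_append_T_E_tfBlock_equiv_powHalf (b : ℕ) {L : List Cell} (hL : E ∉ L)
    (hLF : L.getLast? = some F) :
    tfGame ((L ++ [T]) ++ E :: tfBlock b) ≈ PGame.powHalf b := by
  induction b generalizing L with
  | zero =>
    refine tfGame_equiv_natGame_succ (n := 0)
      (fun m => mem_toadMoves_append_T_E hL (E_notMem_tfBlock 0))
      (fun m => notMem_frogMoves_append_E_nil (by simpa using hL))
      (tfGame_append_E_T_equiv_zero hL hLF (E_notMem_tfBlock 0) (tfBlock_head?_ne_F 0))
  | succ b ih =>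
    exact tfGame_append_replicate_E_tfBlock_equiv_gmk 0 b hL hLF (ih (by simp [hL]) (by simp))

/-- `L T^a □ (TF)^b = { a-1 | (1/2)^(b-1) }` for `a ≥ 1`, `b ≥ 1`,
`L` a `{T,F}`-string ending in `F`. -/
theorem LTabox_TFb (a b : ℕ) (ha : 1 ≤ a) (hb : 1 ≤ b)
    (L : List Cell) (hLE : Cell.E ∉ L) (hL : L.getLast? = some Cell.F) :
    tfGame (L ++ List.replicate a Cell.T ++ [Cell.E] ++ tfBlock b) ≈
      gmk (intGame ((a : ℤ) - 1)) (PGame.powHalf (b - 1)) := by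
  obtain ⟨a, rfl⟩ : ∃ k, a = k + 1 := ⟨a - 1, by omega⟩
  obtain ⟨b, rfl⟩ : ∃ k, b = k + 1 := ⟨b - 1, by omega⟩
  rw [show ((a + 1 : ℕ) : ℤ) - 1 = a by push_cast; ring, Nat.add_sub_cancel,
    show L ++ List.replicate (a + 1) T ++ [E] ++ tfBlock (b + 1)
      = (L ++ List.replicate (a + 1) T) ++ E :: tfBlock (b + 1) by simp]
  exact tfGame_append_replicate_E_tfBlock_equiv_gmk a b hLE hL
    (tfGame_append_T_E_tfBlock_equiv_powHalf b (by simp [hLE]) (by simp))
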